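/- Let D be the incidence matrix of a graph G with maximal vertex degree d, and let T be a nonempty subset of the edge set. Define the compatibility factor κ_T := inf_{θ≠0} √|T|·‖θ‖₂ / ‖(Dᵀθ)_T‖₁ (where (Dᵀθ)_T restricts to coordinates in T). Then κ_T ≥ 1/(2·min{√d, √|T|}). -/
import Mathlib


open Matrix

/-- Lemma 2: compatibility factor bound for graphs of maximal degree `d`:
`κ_T ≥ 1/(2·min{√d, √|T|})`, stated equivalently as
`‖(Dᵀθ)_T‖₁ / (2 min{√d,√|T|}) ≤ √|T|·‖θ‖₂` for all `θ`. -/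
theorem stmt_5 (M m d : ℕ) (e : Fin m → Fin M × Fin M)
    (hend : ∀ j, (e j).1 ≠ (e j).2)
    (hdeg : ∀ v : Fin M,
      (Finset.univ.filter fun j => (e j).1 = v ∨ (e j).2 = v).card ≤ d)
    (D : Matrix (Fin M) (Fin m) ℝ)
    (hD : ∀ i j, D i j = if (e j).1 = i then -1 else if (e j).2 = i then 1 else 0)
    (T : Finset (Fin m)) (hT : T.Nonempty) :
    ∀ θ : Fin M → ℝ,
      (1 / (2 * min (Real.sqrt d) (Real.sqrt T.card))) * (∑ j ∈ T, |(Dᵀ *ᵥ θ) j|)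
        ≤ Real.sqrt T.card * Real.sqrt (∑ i, (θ i) ^ 2) := by
  intro θ
  obtain ⟨j0, hj0⟩ := hT
  have hdpos : 0 < d := by
    have h1 : 0 < (Finset.univ.filter fun j =>
        (e j).1 = (e j0).1 ∨ (e j).2 = (e j0).1).card :=
      Finset.card_pos.mpr ⟨j0, Finset.mem_filter.mpr ⟨Finset.mem_univ _, Or.inl rfl⟩⟩
    exact lt_of_lt_of_le h1 (hdeg _)
  have hTpos : 0 < (T.card : ℝ) := by
    exact_mod_cast Finset.card_pos.mpr ⟨j0, hj0⟩
  set N : ℝ := Real.sqrt (∑ i, (θ i) ^ 2) with hN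
  have hN0 : 0 ≤ N := Real.sqrt_nonneg _
  have hNsq : N ^ 2 = ∑ i, (θ i) ^ 2 := Real.sq_sqrt (by positivity)
  have hθle : ∀ v, |θ v| ≤ N := by
    intro v
    rw [hN, ← Real.sqrt_sq_eq_abs]
    exact Real.sqrt_le_sqrt (Finset.single_le_sum (f := fun i => (θ i) ^ 2)
      (fun i _ => sq_nonneg _) (Finset.mem_univ v))
  have hDval : ∀ j, (Dᵀ *ᵥ θ) j = θ (e j).2 - θ (e j).1 := by
    intro j
    have h := hend j
    simp only [mulVec, dotProduct, transpose_apply, hD]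
    have key : ∀ i, (if (e j).1 = i then (-1 : ℝ) else if (e j).2 = i then 1 else 0) * θ i
        = (if (e j).2 = i then θ i else 0) - (if (e j).1 = i then θ i else 0) := by
      intro i
      rcases eq_or_ne ((e j).1) i with h1 | h1
      · have h2 : (e j).2 ≠ i := fun h2 => h (h1.trans h2.symm)
        simp [h1, h2]
      · rcases eq_or_ne ((e j).2) i with h2 | h2 <;> simp [h1, h2]
    simp only [key, Finset.sum_sub_distrib, Finset.sum_ite_eq, Finset.mem_univ, if_true]
  set c : Fin M → ℝ := fun v =>
    ((T.filter fun j => (e j).1 = v ∨ (e j).2 = v).card : ℝ) with hc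
  have hc0 : ∀ v, 0 ≤ c v := fun v => Nat.cast_nonneg _
  have hcd : ∀ v, c v ≤ d := by
    intro v
    have h2 : (T.filter fun j => (e j).1 = v ∨ (e j).2 = v).card
        ≤ (Finset.univ.filter fun j => (e j).1 = v ∨ (e j).2 = v).card :=
      Finset.card_le_card (Finset.filter_subset_filter _ (Finset.subset_univ T))
    have h3 := h2.trans (hdeg v)
    show (((T.filter fun j => (e j).1 = v ∨ (e j).2 = v).card : ℝ)) ≤ (d : ℝ)
    exact_mod_cast h3
  -- double-counting swap
  have hswap : ∀ f : Fin M → ℝ, ∑ v, c v * f v = ∑ j ∈ T, (f (e j).1 + f (e j).2) := by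
    intro f
    have step1 : ∀ v, c v * f v
        = ∑ j ∈ T, (if (e j).1 = v ∨ (e j).2 = v then f v else 0) := by
      intro v
      rw [← Finset.sum_filter, Finset.sum_const, nsmul_eq_mul, hc]
    have step2 : ∀ j, j ∈ T → (∑ v, (if (e j).1 = v ∨ (e j).2 = v then f v else 0))
        = f (e j).1 + f (e j).2 := by
      intro j _
      have h := hend j
      have key : ∀ v, (if (e j).1 = v ∨ (e j).2 = v then f v else 0)
          = (if (e j).1 = v then f v else 0) + (if (e j).2 = v then f v else 0) := by
        intro v
        rcases eq_or_ne ((e j).1) v with h1 | h1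
        · have h2 : (e j).2 ≠ v := fun h2 => h (h1.trans h2.symm)
          simp [h1, h2]
        · rcases eq_or_ne ((e j).2) v with h2 | h2 <;> simp [h1, h2]
      simp only [key, Finset.sum_add_distrib, Finset.sum_ite_eq, Finset.mem_univ, if_true]
    rw [Finset.sum_congr rfl fun v _ => step1 v, Finset.sum_comm]
    exact Finset.sum_congr rfl step2
  set S : ℝ := ∑ j ∈ T, |(Dᵀ *ᵥ θ) j| with hS
  have hS0 : 0 ≤ S := Finset.sum_nonneg fun j _ => abs_nonneg _
  have hS1 : S ≤ ∑ v, c v * |θ v| := by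
    rw [hswap fun v => |θ v|]
    apply Finset.sum_le_sum
    intro j _
    rw [hDval j, add_comm]
    exact abs_sub _ _
  -- sum of degrees
  have hsumc : ∑ v, c v = 2 * T.card := by
    have := hswap fun _ => (1 : ℝ)
    simp only [mul_one] at this
    rw [this]
    simp [Finset.sum_const, two_mul]
  -- easy bound : S ≤ 2 |T| N
  have hboundT : S ≤ 2 * T.card * N := by
    calc S ≤ ∑ v, c v * |θ v| := hS1
      _ ≤ ∑ v, c v * N := Finset.sum_le_sum fun v _ =>
          mul_le_mul_of_nonneg_left (hθle v) (hc0 v)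
      _ = (∑ v, c v) * N := by rw [Finset.sum_mul]
      _ = 2 * T.card * N := by rw [hsumc]
  -- Cauchy–Schwarz bound : S ≤ 2 √d √|T| N
  have hbounddeg : S ≤ 2 * Real.sqrt d * Real.sqrt T.card * N := by
    have hCS : (∑ v, c v * |θ v|) ^ 2 ≤ (∑ v, (c v) ^ 2) * (∑ v, |θ v| ^ 2) :=
      Finset.sum_mul_sq_le_sq_mul_sq _ _ _
    have hcsq : (∑ v, (c v) ^ 2) ≤ 2 * d * T.card := by
      calc (∑ v, (c v) ^ 2) ≤ ∑ v, (d : ℝ) * c v := Finset.sum_le_sum fun v _ => by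
            have := mul_le_mul_of_nonneg_right (hcd v) (hc0 v)
            nlinarith [hc0 v]
        _ = (d : ℝ) * ∑ v, c v := by rw [Finset.mul_sum]
        _ = 2 * d * T.card := by rw [hsumc]; ring
      -- end
    have habs : (∑ v, |θ v| ^ 2) = N ^ 2 := by
      rw [hNsq]; exact Finset.sum_congr rfl fun v _ => sq_abs _
    have hsq : S ^ 2 ≤ (2 * Real.sqrt d * Real.sqrt T.card * N) ^ 2 := by
      have h1 : S ^ 2 ≤ (∑ v, c v * |θ v|) ^ 2 := by
        have h2 : 0 ≤ ∑ v, c v * |θ v| := Finset.sum_nonneg fun v _ =>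
          mul_nonneg (hc0 v) (abs_nonneg _)
        nlinarith
      have h3 : S ^ 2 ≤ (2 * d * T.card) * N ^ 2 := by
        calc S ^ 2 ≤ (∑ v, (c v) ^ 2) * (∑ v, |θ v| ^ 2) := h1.trans hCS
          _ = (∑ v, (c v) ^ 2) * N ^ 2 := by rw [habs]
          _ ≤ (2 * d * T.card) * N ^ 2 :=
              mul_le_mul_of_nonneg_right hcsq (sq_nonneg _)
      have hd2 : Real.sqrt d ^ 2 = (d : ℝ) := Real.sq_sqrt (by positivity)
      have ht2 : Real.sqrt T.card ^ 2 = (T.card : ℝ) := Real.sq_sqrt (by positivity)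
      have hdcast : (0:ℝ) ≤ (d:ℝ) := by positivity
      have hq : (2 * Real.sqrt d * Real.sqrt T.card * N) ^ 2
          = 4 * (d:ℝ) * T.card * N ^ 2 := by
        have hq' : (2 * Real.sqrt d * Real.sqrt T.card * N) ^ 2
            = 4 * (Real.sqrt d ^ 2) * (Real.sqrt T.card ^ 2) * N ^ 2 := by ring
        rw [hq', hd2, ht2]
      calc S ^ 2 ≤ 2 * d * T.card * N ^ 2 := h3
        _ ≤ 4 * d * T.card * N ^ 2 := by
            nlinarith [mul_nonneg (mul_nonneg hdcast hTpos.le) (sq_nonneg N)]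
        _ = _ := hq.symm
    have hrhs0 : 0 ≤ 2 * Real.sqrt d * Real.sqrt T.card * N := by positivity
    nlinarith
  -- put it together
  have hmin : 0 < min (Real.sqrt d) (Real.sqrt T.card) :=
    lt_min (Real.sqrt_pos.mpr (by exact_mod_cast hdpos)) (Real.sqrt_pos.mpr hTpos)
  rw [one_div, inv_mul_le_iff₀ (by positivity)]
  rcases le_total (Real.sqrt d) (Real.sqrt T.card) with h | h
  · rw [min_eq_left h]
    have : 2 * Real.sqrt d * (Real.sqrt ↑T.card * N)
        = 2 * Real.sqrt d * Real.sqrt ↑T.card * N := by ring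
    linarith [hbounddeg]
  · rw [min_eq_right h]
    have ht2 : Real.sqrt ↑T.card ^ 2 = (T.card : ℝ) := Real.sq_sqrt (by positivity)
    nlinarith [hboundT]
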